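/- arXiv:1502.05579 — 3 statements merged into one kernel-verified Lean document; each statement's English description precedes it below -/
import Mathlib

section
/- Let q ∈ ℂ, and let θ_j ≠ θ_k be two angles in (0, π/2). Consider z_j = q + r_j e^{iθ_j} with r_j ≥ R and z_k = q + r_k e^{iθ_k} with r_k ≥ R. Then there exist R > 0 and δ > 0 (depending only on q, θ_j, θ_k) such that |1/z_j - 1/z_k| ≥ δ / |z_j| for all such z_j, z_k with |z_j|, |z_k| ≥ R. -/
/-!
Rotating by `e^{-iθ_j}`, the imaginary part of `z_j - z_k` is `-r_k sin(θ_k - θ_j)`, so two points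
on distinct rays from `q` are at distance at least `r_k |sin(θ_k - θ_j)|`, while `|z_k| ≤ (|q| + 1) r_k`.
Since `|1/z_j - 1/z_k| = |z_j - z_k| / (|z_j| |z_k|)`, this gives the bound with
`δ = |sin(θ_k - θ_j)| / (|q| + 1)`.
-/

open Complex

lemma div_div_norm_le_norm_inv_sub_inv {𝕜 : Type*} [NormedField 𝕜] {z w : 𝕜} {c C r : ℝ}
    (hz : z ≠ 0) (hw : w ≠ 0) (hc : 0 ≤ c) (hC : 0 < C)
    (hw_le : ‖w‖ ≤ C * r) (hsep : c * r ≤ ‖z - w‖) :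
    c / C / ‖z‖ ≤ ‖z⁻¹ - w⁻¹‖ := by
  have hz' : 0 < ‖z‖ := norm_pos_iff.mpr hz
  have hw' : 0 < ‖w‖ := norm_pos_iff.mpr hw
  rw [← dist_eq_norm, dist_inv_inv₀ hz hw, dist_eq_norm, div_div,
    div_le_div_iff₀ (by positivity) (by positivity)]
  calc c * (‖z‖ * ‖w‖) ≤ c * (‖z‖ * (C * r)) := by gcongr
    _ = C * ‖z‖ * (c * r) := by ring
    _ ≤ C * ‖z‖ * ‖z - w‖ := by gcongr
    _ = ‖z - w‖ * (C * ‖z‖) := by ring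

lemma norm_ofReal_mul_exp_ofReal_mul_I (r θ : ℝ) : ‖(r : ℂ) * exp (θ * I)‖ = |r| := by
  rw [norm_mul, norm_exp_ofReal_mul_I, mul_one, norm_real, Real.norm_eq_abs]

lemma abs_mul_abs_sin_sub_le_norm_sub (q : ℂ) (r s θ φ : ℝ) :
    |s| * |Real.sin (φ - θ)| ≤ ‖(q + r * exp (θ * I)) - (q + s * exp (φ * I))‖ := by
  have hrot : (q + r * exp (θ * I)) - (q + s * exp (φ * I))
      = exp (θ * I) * (r - s * exp ((φ - θ : ℝ) * I)) := by
    rw [mul_sub, mul_left_comm, ← exp_add]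
    push_cast
    ring_nf
  rw [hrot, norm_mul, norm_exp_ofReal_mul_I, one_mul]
  calc |s| * |Real.sin (φ - θ)| = |((r : ℂ) - s * exp ((φ - θ : ℝ) * I)).im| := by
        simp only [sub_im, mul_im, ofReal_re, ofReal_im, exp_ofReal_mul_I_re,
          exp_ofReal_mul_I_im]
        rw [zero_sub, zero_mul, add_zero, abs_neg, abs_mul]
    _ ≤ _ := abs_im_le_norm _

lemma norm_add_ofReal_mul_exp_le (q : ℂ) {r : ℝ} (θ : ℝ) (hr : 1 ≤ r) :
    ‖q + r * exp (θ * I)‖ ≤ (‖q‖ + 1) * r := by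
  calc ‖q + r * exp (θ * I)‖ ≤ ‖q‖ + r := by
        simpa [norm_ofReal_mul_exp_ofReal_mul_I, abs_of_nonneg (by linarith : 0 ≤ r)]
          using norm_add_le q (r * exp (θ * I))
    _ ≤ (‖q‖ + 1) * r := by nlinarith [norm_nonneg q]

lemma add_ofReal_mul_exp_ne_zero (q : ℂ) {r : ℝ} (θ : ℝ) (hr : ‖q‖ < r) :
    q + r * exp (θ * I) ≠ 0 := by
  intro h
  have := norm_ofReal_mul_exp_ofReal_mul_I r θ
  rw [eq_neg_of_add_eq_zero_right h, norm_neg, abs_of_pos ((norm_nonneg q).trans_lt hr)] at this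
  linarith

theorem stmt14 (q : ℂ) (θj θk : ℝ)
    (hθj : θj ∈ Set.Ioo 0 (Real.pi / 2)) (hθk : θk ∈ Set.Ioo 0 (Real.pi / 2))
    (hne : θj ≠ θk) :
    ∃ R > (0 : ℝ), ∃ δ > (0 : ℝ), ∀ rj rk : ℝ, R ≤ rj → R ≤ rk →
      δ / ‖q + (rj : ℂ) * Complex.exp (θj * Complex.I)‖
        ≤ ‖(q + (rj : ℂ) * Complex.exp (θj * Complex.I))⁻¹
            - (q + (rk : ℂ) * Complex.exp (θk * Complex.I))⁻¹‖ := by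
  obtain ⟨hj0, hj1⟩ := hθj
  obtain ⟨hk0, hk1⟩ := hθk
  have hsin : Real.sin (θk - θj) ≠ 0 := by
    rw [Ne, Real.sin_eq_zero_iff_of_lt_of_lt (by linarith) (by linarith), sub_eq_zero]
    exact hne.symm
  have hq := norm_nonneg q
  refine ⟨‖q‖ + 1, by positivity, |Real.sin (θk - θj)| / (‖q‖ + 1),
    div_pos (abs_pos.mpr hsin) (by positivity), fun rj rk hrj hrk => ?_⟩
  refine div_div_norm_le_norm_inv_sub_inv (add_ofReal_mul_exp_ne_zero q θj (by linarith))
    (add_ofReal_mul_exp_ne_zero q θk (by linarith)) (abs_nonneg _) (by positivity)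
    (norm_add_ofReal_mul_exp_le q θk (by linarith)) ?_
  calc |Real.sin (θk - θj)| * rk = |rk| * |Real.sin (θk - θj)| := by
        rw [abs_of_nonneg (by linarith : 0 ≤ rk), mul_comm]
    _ ≤ _ := abs_mul_abs_sin_sub_le_norm_sub q rj rk θj θk
end

section
/- Let a_1, ..., a_ℓ be nonnegative integers with ℓ ≥ 4 even. For 2 ≤ k ≤ ℓ/2 and J ⊆ {1,...,k}, define s_k(J) = Σ_{j=2}^{k} [χ_J(j) a_{2j} + (1 - χ_J(j))(a_{2j+1} + χ_J(j-1) min{a_{2j-1}, a_{2j}})], and set c_k = min{a_2 + s_k(J) : 1, k ∈ J}, d_k = min{a_3 + s_k(J) : 1 ∉ J, k ∈ J}, f_k = min{a_2 + s_k(J) : 1 ∈ J, k ∉ J}, g_k = min{a_3 + s_k(J) : 1, k ∉ J}. Then c_k + g_k ≤ d_k + f_k for every 2 ≤ k ≤ ℓ/2. -/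
/-!
Take minimisers `D` of `d_k` and `F` of `f_k`. Since `1 ∈ F \ D` and `k ∈ D`, there is a first
index `t ≥ 2` with `t ∈ D` or `t ∉ F`; then `t - 1 ∈ F \ D`. Exchanging the tails of `D` and `F`
from `t` on gives a set `C` admissible for `c_k` and a set `G` admissible for `g_k`. The summands
of `s_k` at `j ≠ t` are merely exchanged, and at `j = t` the fact that `t - 1 ∈ F \ D` makes
the exchange not increase the total, so `c_k + g_k ≤ s(C) + s(G) + a_2 + a_3 ≤ d_k + f_k`.
-/

/-- `s_k(J)` from the appendix of the paper. -/
noncomputable def sFun (a : ℕ → ℕ) (k : ℕ) (J : Finset ℕ) : ℕ :=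
  ∑ j ∈ Finset.Icc 2 k,
    if j ∈ J then a (2 * j)
    else a (2 * j + 1) + if j - 1 ∈ J then min (a (2 * j - 1)) (a (2 * j)) else 0

noncomputable def cVal (a : ℕ → ℕ) (k : ℕ) : ℕ :=
  sInf {v | ∃ J : Finset ℕ, J ⊆ Finset.Icc 1 k ∧ 1 ∈ J ∧ k ∈ J ∧ v = a 2 + sFun a k J}

noncomputable def dVal (a : ℕ → ℕ) (k : ℕ) : ℕ :=
  sInf {v | ∃ J : Finset ℕ, J ⊆ Finset.Icc 1 k ∧ 1 ∉ J ∧ k ∈ J ∧ v = a 3 + sFun a k J}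

noncomputable def fVal (a : ℕ → ℕ) (k : ℕ) : ℕ :=
  sInf {v | ∃ J : Finset ℕ, J ⊆ Finset.Icc 1 k ∧ 1 ∈ J ∧ k ∉ J ∧ v = a 2 + sFun a k J}

noncomputable def gVal (a : ℕ → ℕ) (k : ℕ) : ℕ :=
  sInf {v | ∃ J : Finset ℕ, J ⊆ Finset.Icc 1 k ∧ 1 ∉ J ∧ k ∉ J ∧ v = a 3 + sFun a k J}

def splice (t : ℕ) (X Y : Finset ℕ) : Finset ℕ :=
  X.filter (· < t) ∪ Y.filter (t ≤ ·)

section splice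

variable {t j : ℕ} {X Y : Finset ℕ}

theorem mem_splice_of_lt (h : j < t) : j ∈ splice t X Y ↔ j ∈ X := by
  simp [splice, h, Nat.not_le.mpr h]

theorem mem_splice_of_le (h : t ≤ j) : j ∈ splice t X Y ↔ j ∈ Y := by
  simp [splice, h, Nat.not_lt.mpr h]

theorem splice_subset {s : Finset ℕ} (hX : X ⊆ s) (hY : Y ⊆ s) : splice t X Y ⊆ s :=
  Finset.union_subset ((Finset.filter_subset _ _).trans hX) ((Finset.filter_subset _ _).trans hY)

end splice

def sTerm (a : ℕ → ℕ) (J : Finset ℕ) (j : ℕ) : ℕ :=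
  if j ∈ J then a (2 * j)
  else a (2 * j + 1) + if j - 1 ∈ J then min (a (2 * j - 1)) (a (2 * j)) else 0

theorem sFun_eq_sum_sTerm (a : ℕ → ℕ) (k : ℕ) (J : Finset ℕ) :
    sFun a k J = ∑ j ∈ Finset.Icc 2 k, sTerm a J j :=
  rfl

theorem sTerm_congr (a : ℕ → ℕ) {J J' : Finset ℕ} {j : ℕ} (h : j ∈ J ↔ j ∈ J')
    (h' : j - 1 ∈ J ↔ j - 1 ∈ J') : sTerm a J j = sTerm a J' j := by
  simp only [sTerm, h, h']

theorem sTerm_splice_add_le (a : ℕ → ℕ) {X Y : Finset ℕ} {t j : ℕ} (hj : 1 ≤ j)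
    (hX : t - 1 ∈ X) (hY : t - 1 ∉ Y) (ht : t ∈ Y ∨ t ∉ X) :
    sTerm a (splice t X Y) j + sTerm a (splice t Y X) j ≤ sTerm a Y j + sTerm a X j := by
  rcases lt_trichotomy j t with hjt | rfl | hjt
  · rw [sTerm_congr a (mem_splice_of_lt hjt) (mem_splice_of_lt (by omega)),
      sTerm_congr a (mem_splice_of_lt hjt) (mem_splice_of_lt (by omega)), add_comm]
  · have hXY : j - 1 ∈ splice j X Y := (mem_splice_of_lt (by omega)).mpr hX
    have hYX : j - 1 ∉ splice j Y X := fun h => hY ((mem_splice_of_lt (by omega)).mp h)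
    simp only [sTerm, mem_splice_of_le le_rfl, hXY, hYX, hX, hY, if_true, if_false]
    rcases ht with ht | ht <;> split_ifs <;> omega
  · rw [sTerm_congr a (mem_splice_of_le hjt.le) (mem_splice_of_le (by omega)),
      sTerm_congr a (mem_splice_of_le hjt.le) (mem_splice_of_le (by omega))]

theorem sFun_splice_add_le (a : ℕ → ℕ) (k : ℕ) {X Y : Finset ℕ} {t : ℕ}
    (hX : t - 1 ∈ X) (hY : t - 1 ∉ Y) (ht : t ∈ Y ∨ t ∉ X) :
    sFun a k (splice t X Y) + sFun a k (splice t Y X) ≤ sFun a k Y + sFun a k X := by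
  simp only [sFun_eq_sum_sTerm, ← Finset.sum_add_distrib]
  exact Finset.sum_le_sum fun j hj =>
    sTerm_splice_add_le a (one_le_two.trans (Finset.mem_Icc.mp hj).1) hX hY ht

theorem Nat.exists_not_pred_sub_one_and {p : ℕ → Prop} {m n : ℕ} (hm : ¬p m) (hn : p n)
    (hmn : m ≤ n) : ∃ t, m < t ∧ t ≤ n ∧ ¬p (t - 1) ∧ p t := by
  induction n, hmn using Nat.le_induction with
  | base => exact absurd hn hm
  | succ n hmn ih =>
    by_cases hpn : p n
    · obtain ⟨t, hmt, htn, ht⟩ := ih hpn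
      exact ⟨t, hmt, htn.trans n.le_succ, ht⟩
    · exact ⟨n + 1, by omega, le_rfl, hpn, hn⟩

theorem exists_dVal_eq (a : ℕ → ℕ) {k : ℕ} (hk : 2 ≤ k) :
    ∃ D, D ⊆ Finset.Icc 1 k ∧ 1 ∉ D ∧ k ∈ D ∧ dVal a k = a 3 + sFun a k D := by
  have hne : {v | ∃ J : Finset ℕ, J ⊆ Finset.Icc 1 k ∧ 1 ∉ J ∧ k ∈ J ∧
      v = a 3 + sFun a k J}.Nonempty := ⟨_, {k},
    Finset.singleton_subset_iff.mpr (Finset.mem_Icc.mpr ⟨by omega, le_rfl⟩),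
    Finset.notMem_singleton.mpr (by omega), Finset.mem_singleton_self k, rfl⟩
  exact Nat.sInf_mem hne

theorem exists_fVal_eq (a : ℕ → ℕ) {k : ℕ} (hk : 2 ≤ k) :
    ∃ F, F ⊆ Finset.Icc 1 k ∧ 1 ∈ F ∧ k ∉ F ∧ fVal a k = a 2 + sFun a k F := by
  have hne : {v | ∃ J : Finset ℕ, J ⊆ Finset.Icc 1 k ∧ 1 ∈ J ∧ k ∉ J ∧
      v = a 2 + sFun a k J}.Nonempty := ⟨_, {1},
    Finset.singleton_subset_iff.mpr (Finset.mem_Icc.mpr ⟨le_rfl, by omega⟩),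
    Finset.mem_singleton_self 1, Finset.notMem_singleton.mpr (by omega), rfl⟩
  exact Nat.sInf_mem hne

theorem stmt16_general (a : ℕ → ℕ)
    (k : ℕ) (hk : 2 ≤ k) :
    cVal a k + gVal a k ≤ dVal a k + fVal a k := by
  obtain ⟨D, hDsub, hD1, hDk, hD⟩ := exists_dVal_eq a hk
  obtain ⟨F, hFsub, hF1, hFk, hF⟩ := exists_fVal_eq a hk
  obtain ⟨t, ht1, htk, hpred, ht⟩ :=
    Nat.exists_not_pred_sub_one_and (p := fun j => j ∈ D ∨ j ∉ F) (by tauto) (Or.inl hDk)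
      (by omega)
  simp only [not_or, not_not] at hpred
  have hc : cVal a k ≤ a 2 + sFun a k (splice t F D) :=
    Nat.sInf_le ⟨_, splice_subset hFsub hDsub, (mem_splice_of_lt ht1).mpr hF1,
      (mem_splice_of_le htk).mpr hDk, rfl⟩
  have hg : gVal a k ≤ a 3 + sFun a k (splice t D F) :=
    Nat.sInf_le ⟨_, splice_subset hDsub hFsub, fun h => hD1 ((mem_splice_of_lt ht1).mp h),
      fun h => hFk ((mem_splice_of_le htk).mp h), rfl⟩
  have hsplice := sFun_splice_add_le a k hpred.2 hpred.1 ht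
  omega

theorem stmt16 (a : ℕ → ℕ) (ℓ : ℕ) (hℓ : 4 ≤ ℓ) (heven : Even ℓ)
    (k : ℕ) (hk : 2 ≤ k) (hk2 : k ≤ ℓ / 2) :
    cVal a k + gVal a k ≤ dVal a k + fVal a k :=
  stmt16_general a k hk
end

section
/- Let b_1 ≤ b_2 ≤ ... ≤ b_ℓ be nonnegative integers with ℓ ≥ 4 even, and define s_k, c_k, g_k as in the combinatorial setup with a_i = b_i. Then c_{ℓ/2} = Σ_{j=1}^{ℓ/2} b_{2j} and g_{ℓ/2} = Σ_{j=1}^{ℓ/2} b_{2j+1} (with b_{ℓ+1} = b_1), and consequently the maximum of N_1 + ... + N_ℓ over nonnegative integers N_i satisfying the cyclic constraints N_i + N_{i+1} ≤ b_{i+1} (indices mod ℓ) equals Σ_{j=0}^{(ℓ-2)/2} b_{2j+1}. -/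
open Finset

theorem sum_Icc_one_mod {M : Type*} [AddCommMonoid M] (h : ℕ → M) (n : ℕ) :
    ∑ j ∈ Icc 1 n, h (j % n) = ∑ j ∈ range n, h j := by
  cases n with
  | zero => simp
  | succ m =>
    rw [sum_Icc_succ_top (by omega), Nat.mod_self, sum_range_succ']
    congr 1
    rw [← Ico_add_one_right_eq_Icc, sum_Ico_eq_sum_range]
    refine sum_congr rfl fun j hj => ?_
    rw [Nat.mod_eq_of_lt (by simp at hj; omega), add_comm]

theorem sum_Icc_one_two_mul {M : Type*} [AddCommMonoid M] (f : ℕ → M) (K : ℕ) :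
    ∑ i ∈ Icc 1 (2 * K), f i = ∑ j ∈ Icc 1 K, f (2 * j) + ∑ j ∈ range K, f (2 * j + 1) := by
  induction K with
  | zero => simp
  | succ K ih =>
    rw [show 2 * (K + 1) = 2 * K + 1 + 1 by ring, sum_Icc_succ_top (by omega),
      sum_Icc_succ_top (by omega), ih, sum_Icc_succ_top (by omega), sum_range_succ,
      show 2 * K + 1 + 1 = 2 * (K + 1) by ring]
    abel

theorem sFun_Icc_one (a : ℕ → ℕ) (k : ℕ) : sFun a k (Icc 1 k) = ∑ j ∈ Icc 2 k, a (2 * j) :=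
  sum_congr rfl fun j hj => if_pos (Icc_subset_Icc_left (by norm_num) hj)

theorem sFun_empty (a : ℕ → ℕ) (k : ℕ) : sFun a k ∅ = ∑ j ∈ Icc 2 k, a (2 * j + 1) := by
  simp [sFun]

section Monotone

variable {a : ℕ → ℕ} {k : ℕ}

theorem sum_even_le_sFun (hmono : ∀ i, 1 ≤ i → i < 2 * k → a i ≤ a (i + 1)) {J : Finset ℕ}
    (hkJ : k ∈ J) : ∑ j ∈ Icc 2 k, a (2 * j) ≤ sFun a k J := by
  refine sum_le_sum fun j hj => ?_
  obtain ⟨hj2, hjk⟩ := mem_Icc.1 hj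
  by_cases hjJ : j ∈ J
  · rw [if_pos hjJ]
  · replace hjk : j < k := lt_of_le_of_ne hjk fun h => hjJ (h ▸ hkJ)
    rw [if_neg hjJ]
    exact (hmono (2 * j) (by omega) (by omega)).trans (Nat.le_add_right _ _)

/- The extra term is owed when `k ∈ J`: then `a (2k+1)` is only paid for by the `min` term of
index `k + 1`. -/
theorem sum_odd_le_sFun_add (hmono : ∀ i, 1 ≤ i → i < 2 * k → a i ≤ a (i + 1))
    {J : Finset ℕ} (hJ : 1 ∉ J) (hk : 1 ≤ k) :
    ∑ j ∈ Icc 2 k, a (2 * j + 1) ≤ sFun a k J + if k ∈ J then a (2 * k + 1) else 0 := by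
  induction k, hk using Nat.le_induction with
  | base => simp [hJ]
  | succ k hk ih =>
    have ih := ih fun i h1 h2 => hmono i h1 (by omega)
    have hstep : a (2 * k + 1) ≤ a (2 * (k + 1)) := hmono _ (by omega) (by omega)
    rw [sFun, sum_Icc_succ_top (by omega), sum_Icc_succ_top (by omega), ← sFun,
      show 2 * (k + 1) - 1 = 2 * k + 1 by omega, Nat.add_sub_cancel]
    split_ifs at ih ⊢ <;> omega

theorem cVal_eq (hmono : ∀ i, 1 ≤ i → i < 2 * k → a i ≤ a (i + 1)) (hk : 1 ≤ k) :
    cVal a k = ∑ j ∈ Icc 1 k, a (2 * j) := by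
  rw [← add_sum_Ioc_eq_sum_Icc hk, ← Icc_add_one_left_eq_Ioc]
  norm_num only
  refine IsLeast.csInf_eq ⟨⟨Icc 1 k, subset_rfl, by simp [hk], by simp [hk], ?_⟩, ?_⟩
  · rw [sFun_Icc_one]
  · rintro _ ⟨J, -, -, hkJ, rfl⟩
    exact Nat.add_le_add_left (sum_even_le_sFun hmono hkJ) _

theorem gVal_eq (hmono : ∀ i, 1 ≤ i → i < 2 * k → a i ≤ a (i + 1)) (hk : 1 ≤ k) :
    gVal a k = ∑ j ∈ Icc 1 k, a (2 * j + 1) := by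
  rw [← add_sum_Ioc_eq_sum_Icc hk, ← Icc_add_one_left_eq_Ioc]
  norm_num only
  refine IsLeast.csInf_eq ⟨⟨∅, empty_subset _, notMem_empty _, notMem_empty _, ?_⟩, ?_⟩
  · rw [sFun_empty]
  · rintro _ ⟨J, -, h1J, hkJ, rfl⟩
    have := sum_odd_le_sFun_add hmono h1J hk
    rw [if_neg hkJ, add_zero] at this
    exact Nat.add_le_add_left this _

end Monotone

theorem sum_le_of_cyclic_constraint {b N : ℕ → ℕ} {K : ℕ}
    (hN : ∀ i ∈ Icc 1 (2 * K), N i + N (i % (2 * K) + 1) ≤ b (i % (2 * K) + 1)) :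
    ∑ i ∈ Icc 1 (2 * K), N i ≤ ∑ j ∈ range K, b (2 * j + 1) := by
  have hmod (j : ℕ) : 2 * j % (2 * K) = 2 * (j % K) := Nat.mul_mod_mul_left 2 j K
  calc ∑ i ∈ Icc 1 (2 * K), N i
      = ∑ j ∈ Icc 1 K, (N (2 * j) + N (2 * j % (2 * K) + 1)) := by
        simp only [sum_add_distrib, hmod, sum_Icc_one_mod (fun m => N (2 * m + 1)),
          sum_Icc_one_two_mul]
    _ ≤ ∑ j ∈ Icc 1 K, b (2 * j % (2 * K) + 1) :=
        sum_le_sum fun j hj => hN (2 * j) (by simp at hj ⊢; omega)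
    _ = ∑ j ∈ range K, b (2 * j + 1) := by
        simp only [hmod, sum_Icc_one_mod (fun m => b (2 * m + 1))]

theorem isGreatest_cyclic_constraint_sum {b : ℕ → ℕ} {K : ℕ}
    (hmono : ∀ i, 1 ≤ i → i < 2 * K → b i ≤ b (i + 1)) :
    IsGreatest {s : ℕ | ∃ N : ℕ → ℕ, s = ∑ i ∈ Icc 1 (2 * K), N i ∧
        ∀ i ∈ Icc 1 (2 * K), N i + N (i % (2 * K) + 1) ≤ b (i % (2 * K) + 1)}
      (∑ j ∈ range K, b (2 * j + 1)) := by
  refine ⟨⟨fun i => if Even i then 0 else b i, ?_, fun i hi => ?_⟩,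
    fun s ⟨N, hs, hN⟩ => hs ▸ sum_le_of_cyclic_constraint hN⟩
  · simp [sum_Icc_one_two_mul]
  · obtain ⟨hi1, hi2⟩ := mem_Icc.1 hi
    by_cases hi : Even i
    · simp only [if_pos hi, zero_add]
      split_ifs <;> simp
    · have hlt : i < 2 * K := lt_of_le_of_ne hi2 fun h => hi (h ▸ even_two_mul K)
      simp [hi, Nat.mod_eq_of_lt hlt, Nat.even_add_one, hmono i hi1 hlt]

theorem stmt17_general (b : ℕ → ℕ) (ℓ : ℕ) (hℓ : 4 ≤ ℓ) (heven : Even ℓ)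
    (hmono : ∀ i, 1 ≤ i → i < ℓ → b i ≤ b (i + 1)) :
    cVal b (ℓ / 2) = ∑ j ∈ Finset.Icc 1 (ℓ / 2), b (2 * j) ∧
      gVal b (ℓ / 2) = ∑ j ∈ Finset.Icc 1 (ℓ / 2), b (2 * j + 1) ∧
      IsGreatest {s : ℕ | ∃ Nf : ℕ → ℕ, s = ∑ i ∈ Finset.Icc 1 ℓ, Nf i ∧
          ∀ i ∈ Finset.Icc 1 ℓ, Nf i + Nf (i % ℓ + 1) ≤ b (i % ℓ + 1)}
        (∑ j ∈ Finset.range (ℓ / 2), b (2 * j + 1)) := by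
  obtain ⟨K, rfl⟩ := heven.two_dvd
  rw [Nat.mul_div_cancel_left K two_pos]
  exact ⟨cVal_eq hmono (by omega), gVal_eq hmono (by omega),
    isGreatest_cyclic_constraint_sum hmono⟩

theorem stmt17 (b : ℕ → ℕ) (ℓ : ℕ) (hℓ : 4 ≤ ℓ) (heven : Even ℓ)
    (hmono : ∀ i, 1 ≤ i → i < ℓ → b i ≤ b (i + 1)) (hcyc : b (ℓ + 1) = b 1) :
    cVal b (ℓ / 2) = ∑ j ∈ Finset.Icc 1 (ℓ / 2), b (2 * j) ∧
      gVal b (ℓ / 2) = ∑ j ∈ Finset.Icc 1 (ℓ / 2), b (2 * j + 1) ∧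
      IsGreatest {s : ℕ | ∃ Nf : ℕ → ℕ, s = ∑ i ∈ Finset.Icc 1 ℓ, Nf i ∧
          ∀ i ∈ Finset.Icc 1 ℓ, Nf i + Nf (i % ℓ + 1) ≤ b (i % ℓ + 1)}
        (∑ j ∈ Finset.range (ℓ / 2), b (2 * j + 1)) :=
  stmt17_general b ℓ hℓ heven hmono
end
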